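/- arXiv:2404.05655 — 2 statements merged into one kernel-verified Lean document; each statement's English description precedes it below -/
import Mathlib

section
/- Solvability of the discrete Neumann problem (elliptic projection system): Let T be a finite nonempty set, let m : T → ℝ satisfy m K > 0 for every K ∈ T, and let c : T → T → ℝ satisfy c K L = c L K ≥ 0 for all K, L ∈ T and c K K = 0 for all K ∈ T. Assume that the simple graph on T in which two distinct vertices K, L are adjacent if and only if c K L > 0 is preconnected. Then for every b : T → ℝ with Σ_{K ∈ T} b K = 0 and every μ ∈ ℝ there exists a unique w : T → ℝ such that Σ_{K ∈ T} m K · w K = μ and Σ_{L ∈ T} c K L · (w K − w L) = b K for every K ∈ T. -/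
open Finset

/-- Solvability of the discrete Neumann problem (elliptic projection system). -/
theorem discrete_neumann_unique_solvable {T : Type*} [Fintype T] [Nonempty T]
    (m : T → ℝ) (hm : ∀ K, 0 < m K)
    (c : T → T → ℝ)
    (hsymm : ∀ K L, c K L = c L K)
    (hnonneg : ∀ K L, 0 ≤ c K L)
    (hdiag : ∀ K, c K K = 0)
    (G : SimpleGraph T)
    (hAdj : ∀ K L, G.Adj K L ↔ K ≠ L ∧ 0 < c K L)
    (hconn : G.Preconnected) :
    ∀ (b : T → ℝ), (∑ K, b K = 0) → ∀ μ : ℝ,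
      ∃! w : T → ℝ,
        (∑ K, m K * w K = μ) ∧
        ∀ K, ∑ L, c K L * (w K - w L) = b K := by
  classical
  -- Linear maps
  set f : (T → ℝ) →ₗ[ℝ] ℝ :=
    { toFun := fun w => ∑ K, m K * w K
      map_add' := by
        intro x y
        simp only [Pi.add_apply, ← Finset.sum_add_distrib]
        exact Finset.sum_congr rfl fun K _ => by ring
      map_smul' := by
        intro a x
        simp only [Pi.smul_apply, smul_eq_mul, RingHom.id_apply, Finset.mul_sum]
        exact Finset.sum_congr rfl fun K _ => by ring } with hf
  set A : (T → ℝ) →ₗ[ℝ] (T → ℝ) :=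
    { toFun := fun w K => ∑ L, c K L * (w K - w L)
      map_add' := by
        intro x y
        funext K
        simp only [Pi.add_apply, ← Finset.sum_add_distrib]
        exact Finset.sum_congr rfl fun L _ => by ring
      map_smul' := by
        intro a x
        funext K
        simp only [Pi.smul_apply, smul_eq_mul, RingHom.id_apply, Finset.mul_sum]
        exact Finset.sum_congr rfl fun L _ => by ring } with hA
  set Φ : (T → ℝ) →ₗ[ℝ] ℝ × (T → ℝ) := LinearMap.prod f A with hΦ
  -- Injectivity of Φ
  have hinj : Function.Injective Φ := by
    rw [← LinearMap.ker_eq_bot, LinearMap.ker_eq_bot']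
    intro w hw
    have hfw : (∑ K, m K * w K) = 0 := congrArg Prod.fst hw
    have hAw : ∀ K, (∑ L, c K L * (w K - w L)) = 0 := by
      intro K
      have := congrArg Prod.snd hw
      exact congrFun this K
    -- energy identity
    have hS1 : (∑ K, ∑ L, c K L * (w K * (w K - w L))) = 0 := by
      rw [show (∑ K, ∑ L, c K L * (w K * (w K - w L)))
          = ∑ K, w K * ∑ L, c K L * (w K - w L) from
        Finset.sum_congr rfl fun K _ => by
          rw [Finset.mul_sum]; exact Finset.sum_congr rfl fun L _ => by ring]
      simp [hAw]
    have hS2 : (∑ K, ∑ L, c K L * (w L * (w L - w K))) = 0 := by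
      rw [Finset.sum_comm]
      calc (∑ L, ∑ K, c K L * (w L * (w L - w K)))
          = ∑ L, ∑ K, c L K * (w L * (w L - w K)) := by
            exact Finset.sum_congr rfl fun L _ => Finset.sum_congr rfl fun K _ => by
              rw [hsymm]
        _ = 0 := hS1
    have henergy : (∑ K, ∑ L, c K L * (w K - w L) ^ 2) = 0 := by
      have : (∑ K, ∑ L, c K L * (w K - w L) ^ 2)
          = (∑ K, ∑ L, c K L * (w K * (w K - w L)))
            + (∑ K, ∑ L, c K L * (w L * (w L - w K))) := by
        rw [← Finset.sum_add_distrib]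
        refine Finset.sum_congr rfl fun K _ => ?_
        rw [← Finset.sum_add_distrib]
        exact Finset.sum_congr rfl fun L _ => by ring
      rw [this, hS1, hS2, add_zero]
    have hterm : ∀ K L, c K L * (w K - w L) ^ 2 = 0 := by
      have h1 : ∀ K ∈ Finset.univ (α := T), (∑ L, c K L * (w K - w L) ^ 2) = 0 := by
        rw [← Finset.sum_eq_zero_iff_of_nonneg]
        · exact henergy
        · intro K _
          exact Finset.sum_nonneg fun L _ => mul_nonneg (hnonneg K L) (sq_nonneg _)
      intro K L
      have h2 := (Finset.sum_eq_zero_iff_of_nonneg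
        (fun L _ => mul_nonneg (hnonneg K L) (sq_nonneg (w K - w L)))).mp
        (h1 K (Finset.mem_univ K)) L (Finset.mem_univ L)
      exact h2
    have hedge : ∀ K L, G.Adj K L → w K = w L := by
      intro K L hKL
      have hc : 0 < c K L := ((hAdj K L).mp hKL).2
      have h2 : (w K - w L) ^ 2 = 0 := by
        rcases mul_eq_zero.mp (hterm K L) with h | h
        · exact absurd h hc.ne'
        · exact h
      have := sq_eq_zero_iff.mp h2
      linarith
    have hconst : ∀ K L : T, w K = w L := by
      intro K L
      obtain ⟨p⟩ := hconn K L
      induction p with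
      | nil => rfl
      | cons h p ih => exact (hedge _ _ h).trans ih
    obtain ⟨K0⟩ := ‹Nonempty T›
    have hsum : (∑ K, m K) * w K0 = 0 := by
      rw [Finset.sum_mul, ← hfw]
      exact Finset.sum_congr rfl fun K _ => by rw [hconst K K0]
    have hmpos : 0 < ∑ K, m K :=
      Finset.sum_pos (fun K _ => hm K) Finset.univ_nonempty
    have hw0 : w K0 = 0 := by
      rcases mul_eq_zero.mp hsum with h | h
      · exact absurd h (ne_of_gt hmpos)
      · exact h
    funext K
    rw [hconst K K0, hw0]; rfl
  -- the constraint functional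
  set g : (ℝ × (T → ℝ)) →ₗ[ℝ] ℝ :=
    { toFun := fun p => ∑ K, p.2 K
      map_add' := by intro x y; simp [Finset.sum_add_distrib]
      map_smul' := by intro a x; simp [Finset.mul_sum] } with hg
  -- range of Φ is contained in ker g
  have hrange : LinearMap.range Φ ≤ LinearMap.ker g := by
    rintro _ ⟨w, rfl⟩
    have : (∑ K, ∑ L, c K L * (w K - w L)) = 0 := by
      have hanti : (∑ K, ∑ L, c K L * (w K - w L))
          = -(∑ K, ∑ L, c K L * (w K - w L)) := by
        conv_lhs => rw [Finset.sum_comm]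
        rw [← Finset.sum_neg_distrib]
        refine Finset.sum_congr rfl fun L _ => ?_
        rw [← Finset.sum_neg_distrib]
        exact Finset.sum_congr rfl fun K _ => by rw [hsymm]; ring
      linarith
    simpa [hg, hΦ, hA, LinearMap.mem_ker] using this
  -- dimension count
  have hgsurj : Function.Surjective g := by
    intro x
    refine ⟨(0, fun _ => x / (Fintype.card T : ℝ)), ?_⟩
    have hcard : (0 : ℝ) < (Fintype.card T : ℝ) := by
      exact_mod_cast Fintype.card_pos
    simp [hg, Finset.sum_const, hcard.ne', mul_div_cancel₀]
  have hdimker : Module.finrank ℝ (LinearMap.ker g) = Fintype.card T := by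
    have h1 := LinearMap.finrank_range_add_finrank_ker g
    have h2 : Module.finrank ℝ (LinearMap.range g) = 1 := by
      rw [LinearMap.range_eq_top.mpr hgsurj]
      simp
    have h3 : Module.finrank ℝ (ℝ × (T → ℝ)) = 1 + Fintype.card T := by
      simp [Module.finrank_prod]
    omega
  have hdimrange : Module.finrank ℝ (LinearMap.range Φ) = Fintype.card T := by
    rw [LinearMap.finrank_range_of_inj hinj]
    simp
  have heq : LinearMap.range Φ = LinearMap.ker g :=
    Submodule.eq_of_le_of_finrank_le hrange (by rw [hdimker, hdimrange])
  -- conclude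
  intro b hb μ
  have hmem : (μ, b) ∈ LinearMap.ker g := by simpa [hg] using hb
  rw [← heq] at hmem
  obtain ⟨w, hw⟩ := hmem
  refine ⟨w, ?_, ?_⟩
  · constructor
    · exact congrArg Prod.fst hw
    · intro K
      exact congrFun (congrArg Prod.snd hw) K
  · intro w' ⟨h1, h2⟩
    apply hinj
    rw [hw]
    simp only [hΦ, LinearMap.prod_apply, LinearMap.coe_mk, AddHom.coe_mk, Pi.prod]
    exact Prod.ext h1 (funext h2)
end

section
/- Cellwise point-value approximation estimate (Lemma 8.2, q = 2, for smooth representatives): Let d ∈ {2, 3} and let Λ ⊂ ℝ^d be a bounded set. There exists a constant C > 0, depending only on d and Λ, such that for every compact convex set K contained in the closure of Λ, every point y ∈ K, and every twice continuously differentiable function u : ℝ^d → ℝ, one has ∫_K |u(x) − u(y)|² dx ≤ C · (diam K)² · ∫_K ( |u(x)|² + ‖∇u(x)‖² + ‖D²u(x)‖² ) dx. -/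
/-!
Fix `z ∈ K`. Expanding `u z - u x` by Taylor's formula with integral remainder and integrating
over `x ∈ K` bounds `‖|K| u z - ∫_K u‖` by `diam K ∫_K ‖∇u‖` plus
`(diam K)² ∫_K ∫₀¹ (1 - t) ‖D²u((1 - t) x + t z)‖ dt dx`. The first term is handled by
Cauchy–Schwarz. In the second, for fixed `t` the contraction `x ↦ (1 - t) x + t z` maps the convex
set `K` into itself with Jacobian `(1 - t)^d`, so Cauchy–Schwarz bounds the inner integral by
`(1 - t)^(1 - d/2) |K|^(1/2) ‖D²u‖_{L²(K)}`, which is integrable in `t` precisely when `d ≤ 3`.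
Comparing two points then bounds `|u x - u y|` by `|K|^(-1/2)` times the `H²`-seminorm of `u` on
`K`, and integrating its square gives the estimate, with a constant depending only on `diam Λ`.
-/

open MeasureTheory Set Module Metric

theorem setIntegral_le_sqrt_measureReal_mul_sqrt {α : Type*} [MeasurableSpace α]
    {μ : Measure α} {s : Set α} (hs : μ s ≠ ⊤) {f : α → ℝ} (hf : MemLp f 2 (μ.restrict s)) :
    ∫ x in s, f x ∂μ ≤ √(μ.real s) * √(∫ x in s, f x ^ 2 ∂μ) := by
  have : Fact (μ s < ⊤) := ⟨hs.lt_top⟩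
  have holder := integral_mul_le_Lp_mul_Lq_of_nonneg Real.HolderConjugate.two_two
    (ae_of_all _ fun _ => zero_le_one) (ae_of_all _ fun x => abs_nonneg (f x))
    (memLp_const (μ := μ.restrict s) (1 : ℝ)) (by rw [ENNReal.ofReal_ofNat]; exact hf.abs)
  simp only [one_mul, Real.one_rpow, integral_const, smul_eq_mul, mul_one,
    measureReal_restrict_apply_univ] at holder
  rw [Real.sqrt_eq_rpow, Real.sqrt_eq_rpow]
  calc ∫ x in s, f x ∂μ ≤ ∫ x in s, |f x| ∂μ :=
        integral_mono (hf.integrable one_le_two) (hf.abs.integrable one_le_two)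
          fun x => le_abs_self (f x)
    _ ≤ _ := holder
    _ = _ := by norm_num [sq_abs]

theorem Continuous.memLp_two_restrict {X : Type*} [TopologicalSpace X] [T2Space X]
    [MeasurableSpace X] [OpensMeasurableSpace X] {μ : Measure X} [IsFiniteMeasureOnCompacts μ]
    {f : X → ℝ} (hf : Continuous f) {K : Set X} (hK : IsCompact K) : MemLp f 2 (μ.restrict K) :=
  (memLp_two_iff_integrable_sq hf.aestronglyMeasurable).2
    ((hf.pow 2).continuousOn.integrableOn_compact hK)

theorem mul_sqrt_inv_pow_le_rpow_neg_half {c : ℝ} (hc0 : 0 < c) (hc1 : c ≤ 1) {n : ℕ}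
    (hn : n ≤ 3) : c * √((c ^ n)⁻¹) ≤ c ^ (-(1 / 2) : ℝ) := by
  have : c * √((c ^ n)⁻¹) = c ^ (1 + -(n / 2) : ℝ) := by
    rw [Real.rpow_add hc0, Real.rpow_one, Real.sqrt_eq_rpow, ← Real.rpow_natCast,
      ← Real.rpow_neg hc0.le, ← Real.rpow_mul hc0.le]
    ring_nf
  rw [this]
  exact Real.rpow_le_rpow_of_exponent_ge hc0 hc1 (by
    have : (n : ℝ) ≤ 3 := by exact_mod_cast hn
    linarith)

theorem intervalIntegrable_one_sub_rpow_neg_half :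
    IntervalIntegrable (fun t : ℝ => (1 - t) ^ (-(1 / 2) : ℝ)) volume 0 1 := by
  simpa using ((intervalIntegral.intervalIntegrable_rpow' (a := 0) (b := 1)
    (r := -(1 / 2)) (by norm_num)).comp_sub_left 1).symm

theorem integral_one_sub_rpow_neg_half :
    ∫ t in (0 : ℝ)..1, (1 - t) ^ (-(1 / 2) : ℝ) = 2 := by
  rw [intervalIntegral.integral_comp_sub_left (fun s : ℝ => s ^ (-(1 / 2) : ℝ)) 1,
    integral_rpow (Or.inl (by norm_num))]
  norm_num

section

variable {E F : Type*} [NormedAddCommGroup E] [NormedSpace ℝ E] [NormedAddCommGroup F]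
  [NormedSpace ℝ F] [CompleteSpace F]

theorem taylor_integral_remainder_two {u : E → F} (hu : ContDiff ℝ 2 u) (x z : E) :
    u z - u x - fderiv ℝ u x (z - x) =
      ∫ t in (0 : ℝ)..1, (1 - t) • fderiv ℝ (fderiv ℝ u) (x + t • (z - x)) (z - x) (z - x) := by
  set v := z - x
  have hu1 : ContDiff ℝ 1 (fderiv ℝ u) := hu.fderiv_right (by norm_num)
  have hγ : ∀ t : ℝ, HasDerivAt (fun s : ℝ => x + s • v) v t := fun t => by
    simpa using ((hasDerivAt_id t).smul_const v).const_add x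
  have hderiv : ∀ t : ℝ,
      HasDerivAt (fun s : ℝ => u (x + s • v) + (1 - s) • fderiv ℝ u (x + s • v) v)
        ((1 - t) • fderiv ℝ (fderiv ℝ u) (x + t • v) v v) t := fun t => by
    have h1 := ((hu.differentiable two_ne_zero) _).hasFDerivAt.comp_hasDerivAt t (hγ t)
    have h2 := (((hu1.differentiable one_ne_zero) _).hasFDerivAt.comp_hasDerivAt t
      (hγ t)).clm_apply (hasDerivAt_const t v)
    have h3 := ((hasDerivAt_id t).const_sub 1).smul h2
    refine (h1.add h3).congr_deriv ?_
    simp only [Function.comp_apply, id, map_zero, add_zero, neg_one_smul]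
    abel
  have hcont : Continuous fun t : ℝ => (1 - t) • fderiv ℝ (fderiv ℝ u) (x + t • v) v v := by
    have := hu1.continuous_fderiv one_ne_zero
    fun_prop
  rw [intervalIntegral.integral_eq_sub_of_hasDerivAt (fun t _ => hderiv t)
    (hcont.intervalIntegrable 0 1)]
  simp only [zero_smul, add_zero, sub_self, one_smul, sub_zero, v, add_sub_cancel]
  abel

theorem norm_taylor_remainder_two_le {u : E → F} (hu : ContDiff ℝ 2 u) (x z : E) :
    ‖u z - u x - fderiv ℝ u x (z - x)‖ ≤
      ‖z - x‖ ^ 2 * ∫ t in (0 : ℝ)..1, (1 - t) * ‖iteratedFDeriv ℝ 2 u ((1 - t) • x + t • z)‖ := by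
  have hpath : ∀ t : ℝ, x + t • (z - x) = (1 - t) • x + t • z := fun t => by
    rw [smul_sub, sub_smul, one_smul]; abel
  have hD2 : ∀ w, ‖fderiv ℝ (fderiv ℝ u) w (z - x) (z - x)‖ ≤
      ‖iteratedFDeriv ℝ 2 u w‖ * ‖z - x‖ ^ 2 := fun w => by
    have := (iteratedFDeriv ℝ 2 u w).le_opNorm ![z - x, z - x]
    simpa [iteratedFDeriv_two_apply, Fin.prod_univ_two, sq] using this
  rw [taylor_integral_remainder_two hu, ← intervalIntegral.integral_const_mul]
  have hD2c : Continuous (iteratedFDeriv ℝ 2 u) := hu.continuous_iteratedFDeriv le_rfl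
  refine intervalIntegral.norm_integral_le_of_norm_le zero_le_one
    (ae_of_all _ fun t ht => ?_) (Continuous.intervalIntegrable (by fun_prop) 0 1)
  rw [norm_smul, Real.norm_of_nonneg (sub_nonneg.2 ht.2), hpath]
  calc (1 - t) * ‖fderiv ℝ (fderiv ℝ u) ((1 - t) • x + t • z) (z - x) (z - x)‖
      ≤ (1 - t) * (‖iteratedFDeriv ℝ 2 u ((1 - t) • x + t • z)‖ * ‖z - x‖ ^ 2) := by
        gcongr
        · linarith [ht.2]
        · exact hD2 _
    _ = _ := by ring

variable [MeasurableSpace E] [BorelSpace E] [FiniteDimensional ℝ E] (μ : Measure E)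
  [μ.IsAddHaarMeasure]

theorem setIntegral_comp_smul_add {G : Type*} [NormedAddCommGroup G] [NormedSpace ℝ G]
    (f : E → G) {c : ℝ} (hc : 0 < c) (a : E) (s : Set E) :
    ∫ x in s, f (c • x + a) ∂μ = (c ^ finrank ℝ E)⁻¹ • ∫ y in (c • ·  + a) '' s, f y ∂μ := by
  rw [Measure.setIntegral_comp_smul_of_pos μ (f <| · + a) s hc,
    ← (measurePreserving_add_right μ a).setIntegral_image_emb
      (MeasurableEquiv.addRight a).measurableEmbedding f, ← image_smul, image_image]

theorem setIntegral_sq_comp_convexCombo_le {s : Set E} (hs : Convex ℝ s) {z : E} (hz : z ∈ s)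
    {t : ℝ} (ht0 : 0 ≤ t) (ht1 : t < 1) {g : E → ℝ}
    (hg : IntegrableOn (fun x => g x ^ 2) s μ) :
    ∫ x in s, g ((1 - t) • x + t • z) ^ 2 ∂μ ≤
      ((1 - t) ^ finrank ℝ E)⁻¹ * ∫ x in s, g x ^ 2 ∂μ := by
  rw [setIntegral_comp_smul_add μ (g · ^ 2) (sub_pos.2 ht1), smul_eq_mul]
  refine mul_le_mul_of_nonneg_left (setIntegral_mono_set hg
    (ae_of_all _ fun x => sq_nonneg (g x)) (ae_of_all _ ?_)) (by positivity)
  rintro _ ⟨x, hx, rfl⟩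
  exact hs hx hz (sub_nonneg.2 ht1.le) ht0 (sub_add_cancel 1 t)

variable {μ} in
theorem one_sub_mul_setIntegral_comp_convexCombo_le (hn : finrank ℝ E ≤ 3) {K : Set E}
    (hK : IsCompact K) (hKc : Convex ℝ K) {z : E} (hz : z ∈ K) {g : E → ℝ} (hg : Continuous g)
    {t : ℝ} (ht0 : 0 ≤ t) (ht1 : t ≤ 1) :
    (1 - t) * ∫ x in K, g ((1 - t) • x + t • z) ∂μ ≤
      √(μ.real K) * √(∫ x in K, g x ^ 2 ∂μ) * (1 - t) ^ (-(1 / 2) : ℝ) := by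
  rcases ht1.eq_or_lt with rfl | ht1
  · simp
  have hgt : Continuous fun x => g ((1 - t) • x + t • z) := by fun_prop
  calc (1 - t) * ∫ x in K, g ((1 - t) • x + t • z) ∂μ
      ≤ (1 - t) * (√(μ.real K) * √(∫ x in K, g ((1 - t) • x + t • z) ^ 2 ∂μ)) := by
        gcongr
        exact setIntegral_le_sqrt_measureReal_mul_sqrt hK.measure_lt_top.ne
          (hgt.memLp_two_restrict hK)
    _ ≤ (1 - t) * (√(μ.real K) * √(((1 - t) ^ finrank ℝ E)⁻¹ * ∫ x in K, g x ^ 2 ∂μ)) := by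
        gcongr
        exact setIntegral_sq_comp_convexCombo_le μ hKc hz ht0 ht1
          ((hg.pow 2).continuousOn.integrableOn_compact hK)
    _ = √(μ.real K) * √(∫ x in K, g x ^ 2 ∂μ) * ((1 - t) * √(((1 - t) ^ finrank ℝ E)⁻¹)) := by
        rw [Real.sqrt_mul (by positivity)]; ring
    _ ≤ _ := by
        gcongr
        exact mul_sqrt_inv_pow_le_rpow_neg_half (sub_pos.2 ht1) (by linarith) hn

variable {μ} in
theorem setIntegral_intervalIntegral_comp_convexCombo_le (hn : finrank ℝ E ≤ 3) {K : Set E}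
    (hK : IsCompact K) (hKc : Convex ℝ K) {z : E} (hz : z ∈ K) {g : E → ℝ} (hg : Continuous g) :
    ∫ x in K, (∫ t in (0 : ℝ)..1, (1 - t) * g ((1 - t) • x + t • z)) ∂μ
      ≤ 2 * √(μ.real K) * √(∫ x in K, g x ^ 2 ∂μ) := by
  set F : E → ℝ → ℝ := fun x t => (1 - t) * g ((1 - t) • x + t • z)
  have hF : Continuous F.uncurry := by fun_prop
  have hFint : Integrable F.uncurry ((μ.restrict K).prod (volume.restrict (Ioc 0 1))) := by
    rw [Measure.prod_restrict]
    exact (hF.continuousOn.integrableOn_compact (hK.prod isCompact_Icc)).mono_set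
      (prod_mono subset_rfl Ioc_subset_Icc_self)
  calc ∫ x in K, (∫ t in (0 : ℝ)..1, F x t) ∂μ
      = ∫ t in (0 : ℝ)..1, ∫ x in K, F x t ∂μ := by
        simp only [intervalIntegral.integral_of_le zero_le_one]
        exact integral_integral_swap hFint
    _ ≤ ∫ t in (0 : ℝ)..1, √(μ.real K) * √(∫ x in K, g x ^ 2 ∂μ) * (1 - t) ^ (-(1 / 2) : ℝ) :=
        intervalIntegral.integral_mono_on zero_le_one
          ((intervalIntegrable_iff_integrableOn_Ioc_of_le zero_le_one).2 hFint.integral_prod_right)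
          (intervalIntegrable_one_sub_rpow_neg_half.const_mul _) fun t ht =>
            (integral_const_mul _ _).trans_le
              (one_sub_mul_setIntegral_comp_convexCombo_le hn hK hKc hz hg ht.1 ht.2)
    _ = 2 * √(μ.real K) * √(∫ x in K, g x ^ 2 ∂μ) := by
        rw [intervalIntegral.integral_const_mul, integral_one_sub_rpow_neg_half]; ring

variable {μ} in
theorem norm_measureReal_smul_sub_setIntegral_le (hn : finrank ℝ E ≤ 3) {K : Set E}
    (hK : IsCompact K) (hKc : Convex ℝ K) {u : E → F} (hu : ContDiff ℝ 2 u) {z : E} (hz : z ∈ K) :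
    ‖μ.real K • u z - ∫ x in K, u x ∂μ‖ ≤
      √(μ.real K) * (diam K * √(∫ x in K, ‖fderiv ℝ u x‖ ^ 2 ∂μ) +
        2 * diam K ^ 2 * √(∫ x in K, ‖iteratedFDeriv ℝ 2 u x‖ ^ 2 ∂μ)) := by
  set δ := diam K
  set P : E → ℝ := fun x =>
    ∫ t in (0 : ℝ)..1, (1 - t) * ‖iteratedFDeriv ℝ 2 u ((1 - t) • x + t • z)‖
  have hD1 : Continuous fun x => ‖fderiv ℝ u x‖ := (hu.continuous_fderiv two_ne_zero).norm
  have hD2 : Continuous fun x => ‖iteratedFDeriv ℝ 2 u x‖ :=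
    (hu.continuous_iteratedFDeriv le_rfl).norm
  have hP : Continuous P :=
    intervalIntegral.continuous_parametric_intervalIntegral_of_continuous' (by fun_prop) 0 1
  have hpointwise : ∀ x ∈ K, ‖u z - u x‖ ≤ δ * ‖fderiv ℝ u x‖ + δ ^ 2 * P x := by
    intro x hx
    have hzx : ‖z - x‖ ≤ δ := by
      rw [← dist_eq_norm]; exact dist_le_diam_of_mem hK.isBounded hz hx
    have hP0 : 0 ≤ P x := intervalIntegral.integral_nonneg zero_le_one fun t ht =>
      mul_nonneg (sub_nonneg.2 ht.2) (norm_nonneg _)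
    calc ‖u z - u x‖ ≤ ‖fderiv ℝ u x (z - x)‖ + ‖u z - u x - fderiv ℝ u x (z - x)‖ :=
          norm_le_insert' _ _
      _ ≤ ‖fderiv ℝ u x‖ * ‖z - x‖ + ‖z - x‖ ^ 2 * P x :=
          add_le_add ((fderiv ℝ u x).le_opNorm _) (norm_taylor_remainder_two_le hu x z)
      _ ≤ δ * ‖fderiv ℝ u x‖ + δ ^ 2 * P x := by
          rw [mul_comm]; gcongr
  have hμK : μ K ≠ ⊤ := hK.measure_lt_top.ne
  have hint : ∀ {f : E → ℝ}, Continuous f → IntegrableOn f K μ := fun hf =>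
    hf.continuousOn.integrableOn_compact hK
  calc ‖μ.real K • u z - ∫ x in K, u x ∂μ‖ = ‖∫ x in K, (u z - u x) ∂μ‖ := by
        rw [integral_sub (integrableOn_const (C := u z) hμK)
          (hu.continuous.continuousOn.integrableOn_compact hK), setIntegral_const]
    _ ≤ ∫ x in K, (δ * ‖fderiv ℝ u x‖ + δ ^ 2 * P x) ∂μ :=
        norm_integral_le_of_norm_le (hint (by fun_prop))
          (ae_restrict_of_forall_mem hK.measurableSet hpointwise)
    _ = δ * ∫ x in K, ‖fderiv ℝ u x‖ ∂μ + δ ^ 2 * ∫ x in K, P x ∂μ := by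
        rw [integral_add ((hint hD1).const_mul δ) ((hint hP).const_mul _), integral_const_mul,
          integral_const_mul]
    _ ≤ δ * (√(μ.real K) * √(∫ x in K, ‖fderiv ℝ u x‖ ^ 2 ∂μ)) +
          δ ^ 2 * (2 * √(μ.real K) * √(∫ x in K, ‖iteratedFDeriv ℝ 2 u x‖ ^ 2 ∂μ)) := by
        gcongr
        · exact setIntegral_le_sqrt_measureReal_mul_sqrt hμK (hD1.memLp_two_restrict hK)
        · exact setIntegral_intervalIntegral_comp_convexCombo_le hn hK hKc hz hD2
    _ = _ := by ring

variable {μ} in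
theorem measureReal_mul_norm_sub_le (hn : finrank ℝ E ≤ 3) {K : Set E} (hK : IsCompact K)
    (hKc : Convex ℝ K) {u : E → F} (hu : ContDiff ℝ 2 u) {x y : E} (hx : x ∈ K) (hy : y ∈ K) :
    μ.real K * ‖u x - u y‖ ≤
      2 * √(μ.real K) * (diam K * √(∫ x in K, ‖fderiv ℝ u x‖ ^ 2 ∂μ) +
        2 * diam K ^ 2 * √(∫ x in K, ‖iteratedFDeriv ℝ 2 u x‖ ^ 2 ∂μ)) := by
  calc μ.real K * ‖u x - u y‖
      = ‖(μ.real K • u x - ∫ w in K, u w ∂μ) - (μ.real K • u y - ∫ w in K, u w ∂μ)‖ := by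
        rw [sub_sub_sub_cancel_right, ← smul_sub, norm_smul, Real.norm_of_nonneg measureReal_nonneg]
    _ ≤ _ := (norm_sub_le_of_le (norm_measureReal_smul_sub_setIntegral_le hn hK hKc hu hx)
          (norm_measureReal_smul_sub_setIntegral_le hn hK hKc hu hy)).trans_eq (by ring)

variable {μ} in
theorem setIntegral_norm_sub_sq_le (hn : finrank ℝ E ≤ 3) {K : Set E} (hK : IsCompact K)
    (hKc : Convex ℝ K) {u : E → F} (hu : ContDiff ℝ 2 u) {y : E} (hy : y ∈ K) :
    ∫ x in K, ‖u x - u y‖ ^ 2 ∂μ ≤ 8 * diam K ^ 2 * (1 + 4 * diam K ^ 2) *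
      ∫ x in K, (‖fderiv ℝ u x‖ ^ 2 + ‖iteratedFDeriv ℝ 2 u x‖ ^ 2) ∂μ := by
  set δ := diam K
  set V := μ.real K
  set N₁ := √(∫ x in K, ‖fderiv ℝ u x‖ ^ 2 ∂μ)
  set N₂ := √(∫ x in K, ‖iteratedFDeriv ℝ 2 u x‖ ^ 2 ∂μ)
  have hμK : μ K ≠ ⊤ := hK.measure_lt_top.ne
  have hint : ∀ {f : E → ℝ}, Continuous f → IntegrableOn f K μ := fun hf =>
    hf.continuousOn.integrableOn_compact hK
  have hD1 : Continuous fun x => ‖fderiv ℝ u x‖ := (hu.continuous_fderiv two_ne_zero).norm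
  have hD2 : Continuous fun x => ‖iteratedFDeriv ℝ 2 u x‖ :=
    (hu.continuous_iteratedFDeriv le_rfl).norm
  have hN : ∫ x in K, (‖fderiv ℝ u x‖ ^ 2 + ‖iteratedFDeriv ℝ 2 u x‖ ^ 2) ∂μ = N₁ ^ 2 + N₂ ^ 2 := by
    rw [integral_add (hint (f := fun x => ‖fderiv ℝ u x‖ ^ 2) (by fun_prop))
      (hint (f := fun x => ‖iteratedFDeriv ℝ 2 u x‖ ^ 2) (by fun_prop)),
      Real.sq_sqrt (setIntegral_nonneg hK.measurableSet fun _ _ => sq_nonneg _),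
      Real.sq_sqrt (setIntegral_nonneg hK.measurableSet fun _ _ => sq_nonneg _)]
  rcases (measureReal_nonneg : 0 ≤ V).eq_or_lt with hV | hV
  · have : μ K = 0 := (measureReal_eq_zero_iff hμK).1 hV.symm
    simp [Measure.restrict_eq_zero.2 this]
  set B := δ * N₁ + 2 * δ ^ 2 * N₂
  have hosc : ∀ x ∈ K, ‖u x - u y‖ ≤ 2 * B / √V := by
    intro x hx
    have hsV := Real.sqrt_pos.2 hV
    rw [le_div_iff₀ hsV, ← mul_le_mul_iff_of_pos_left hsV]
    calc √V * (‖u x - u y‖ * √V) = V * ‖u x - u y‖ := by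
          rw [mul_comm ‖_‖, ← mul_assoc, Real.mul_self_sqrt hV.le]
      _ ≤ 2 * √V * B := measureReal_mul_norm_sub_le hn hK hKc hu hx hy
      _ = √V * (2 * B) := by ring
  calc ∫ x in K, ‖u x - u y‖ ^ 2 ∂μ ≤ ∫ x in K, (2 * B / √V) ^ 2 ∂μ :=
        setIntegral_mono_on (hint (by fun_prop)) (integrableOn_const hμK) hK.measurableSet
          fun x hx => pow_le_pow_left₀ (norm_nonneg _) (hosc x hx) 2
    _ = 4 * B ^ 2 := by
        rw [setIntegral_const, smul_eq_mul, div_pow, Real.sq_sqrt hV.le]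
        field_simp
        ring
    _ ≤ 8 * δ ^ 2 * (1 + 4 * δ ^ 2) * (N₁ ^ 2 + N₂ ^ 2) := by
        nlinarith [sq_nonneg (δ * N₁ - 2 * δ ^ 2 * N₂), sq_nonneg (δ * N₁), sq_nonneg (δ * N₂),
          sq_nonneg (δ ^ 2 * N₁)]
    _ = _ := by rw [hN]

end

/-- Cellwise point-value approximation estimate (Lemma 8.2, q = 2,
for smooth representatives). -/
theorem cellwise_point_value_estimate
    (d : ℕ) (hd : d = 2 ∨ d = 3)
    (Λ : Set (EuclideanSpace ℝ (Fin d)))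
    (hΛ : Bornology.IsBounded Λ) :
    ∃ C > (0 : ℝ),
      ∀ K : Set (EuclideanSpace ℝ (Fin d)),
        IsCompact K → Convex ℝ K → K ⊆ closure Λ →
        ∀ y ∈ K, ∀ u : EuclideanSpace ℝ (Fin d) → ℝ, ContDiff ℝ 2 u →
          ∫ x in K, |u x - u y| ^ 2
            ≤ C * Metric.diam K ^ 2 *
              ∫ x in K,
                (|u x| ^ 2 + ‖fderiv ℝ u x‖ ^ 2 + ‖iteratedFDeriv ℝ 2 u x‖ ^ 2) := by
  set D := diam (closure Λ)
  refine ⟨8 * (1 + 4 * D ^ 2), by positivity, fun K hK hKc hKΛ y hy u hu => ?_⟩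
  have hn : finrank ℝ (EuclideanSpace ℝ (Fin d)) ≤ 3 := by
    rw [finrank_euclideanSpace_fin]; omega
  have hδ : diam K ≤ D := diam_mono hKΛ hΛ.closure
  have hint : ∀ {f : EuclideanSpace ℝ (Fin d) → ℝ}, Continuous f → IntegrableOn f K := fun hf =>
    hf.continuousOn.integrableOn_compact hK
  have hD1 : Continuous fun x => ‖fderiv ℝ u x‖ := (hu.continuous_fderiv two_ne_zero).norm
  have hD2 : Continuous fun x => ‖iteratedFDeriv ℝ 2 u x‖ :=
    (hu.continuous_iteratedFDeriv le_rfl).norm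
  calc ∫ x in K, |u x - u y| ^ 2
      ≤ 8 * diam K ^ 2 * (1 + 4 * diam K ^ 2) *
          ∫ x in K, (‖fderiv ℝ u x‖ ^ 2 + ‖iteratedFDeriv ℝ 2 u x‖ ^ 2) := by
        simpa only [Real.norm_eq_abs] using setIntegral_norm_sub_sq_le hn hK hKc hu hy
    _ ≤ 8 * (1 + 4 * D ^ 2) * diam K ^ 2 *
          ∫ x in K, (|u x| ^ 2 + ‖fderiv ℝ u x‖ ^ 2 + ‖iteratedFDeriv ℝ 2 u x‖ ^ 2) := by
        rw [mul_right_comm 8]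
        gcongr 8 * ?_ * _ * ?_
        · gcongr
        · exact setIntegral_mono_on (hint (by fun_prop)) (hint (by fun_prop)) hK.measurableSet
            fun x _ => by nlinarith [sq_nonneg |u x|]
end
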